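/- arXiv:2103.07288 — 5 statements merged into one kernel-verified Lean document; each statement's English description precedes it below -/
import Mathlib

section
/- Let H_L, E_L be diagonal m×m real matrices and H_R, E_R diagonal k×k real matrices, and let I_{R2L} ∈ ℝ^{m×k}, I_{L2R} ∈ ℝ^{k×m} satisfy the SBP-preserving property H_R I_{L2R} = I_{R2L}ᵀ H_L. Let u, w ∈ ℝᵐ, v, z ∈ ℝᵏ, and let δ_L, σ_L, δ_R, σ_R ∈ ℝ satisfy δ_L = −σ_R, σ_L = −δ_R, and δ_L + σ_L = −1. Then 2uᵀH_L E_L w − 2vᵀH_R E_R z + 2δ_L uᵀH_L (E_L w − I_{R2L} E_R z) + 2σ_L wᵀH_L E_L (u − I_{R2L} v) + 2δ_R vᵀH_R (E_R z − I_{L2R} E_L w) + 2σ_R zᵀH_R E_R (v − I_{L2R} u) = 0. -/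
/-!
The SAT penalty terms pair off against the two diffusion interface terms once every bilinear
form is moved onto a common side. With `⟨x, y⟩_H := x ⬝ᵥ H *ᵥ y`, diagonal `H` and `E` make
`⟨x, E y⟩_H = ⟨E x, y⟩_H`, and the SBP-preserving property says exactly that `I_{L2R}` and
`I_{R2L}` are adjoint: `⟨x, I_{L2R} y⟩_{H_R} = ⟨I_{R2L} x, y⟩_{H_L}`. After these rewrites the
cross terms cancel by `δ_L = -σ_R`, `σ_L = -δ_R`, leaving
`2 (1 + δ_L + σ_L) (⟨u, E_L w⟩_{H_L} - ⟨v, E_R z⟩_{H_R}) = 0`.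
-/

open Matrix

section WeightedForm

variable {R : Type*} [CommSemiring R] {n : Type*} [Fintype n]

theorem Matrix.IsSymm.dotProduct_mulVec_comm {H : Matrix n n R} (hH : H.IsSymm) (x y : n → R) :
    x ⬝ᵥ H *ᵥ y = y ⬝ᵥ H *ᵥ x := by
  rw [← dotProduct_transpose_mulVec, hH.eq]

theorem Matrix.IsDiag.dotProduct_mulVec_mulVec_comm {H E : Matrix n n R} (hH : H.IsDiag)
    (hE : E.IsDiag) (x y : n → R) : x ⬝ᵥ H *ᵥ (E *ᵥ y) = (E *ᵥ x) ⬝ᵥ H *ᵥ y := by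
  classical
  rw [← hH.diagonal_diag, ← hE.diagonal_diag]
  simp only [mulVec_diagonal, dotProduct]
  exact Finset.sum_congr rfl fun i _ => by ring

theorem Matrix.dotProduct_mulVec_mulVec_eq_of_mul_eq_transpose_mul {m k : Type*} [Fintype m]
    [Fintype k] {HL : Matrix m m R} {HR : Matrix k k R} {IR2L : Matrix m k R}
    {IL2R : Matrix k m R} (hSBP : HR * IL2R = IR2Lᵀ * HL) (x : k → R) (y : m → R) :
    x ⬝ᵥ HR *ᵥ (IL2R *ᵥ y) = (IR2L *ᵥ x) ⬝ᵥ HL *ᵥ y := by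
  rw [mulVec_mulVec, hSBP, ← mulVec_mulVec, dotProduct_mulVec, vecMul_transpose]

end WeightedForm

/-- Viscous (diffusion) cancellation for the FD–FD interface coupling with
penalty parameters `δL = −σR`, `σL = −δR`, `δL + σL = −1`. -/
theorem stmt_7 (m k : ℕ)
    (HL EL : Matrix (Fin m) (Fin m) ℝ) (hHL : HL.IsDiag) (hEL : EL.IsDiag)
    (HR ER : Matrix (Fin k) (Fin k) ℝ) (hHR : HR.IsDiag) (hER : ER.IsDiag)
    (IR2L : Matrix (Fin m) (Fin k) ℝ) (IL2R : Matrix (Fin k) (Fin m) ℝ)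
    (hSBP : HR * IL2R = IR2Lᵀ * HL)
    (u w : Fin m → ℝ) (v z : Fin k → ℝ)
    (δL σL δR σR : ℝ)
    (h1 : δL = -σR) (h2 : σL = -δR) (h3 : δL + σL = -1) :
    2 * (u ⬝ᵥ HL *ᵥ (EL *ᵥ w)) - 2 * (v ⬝ᵥ HR *ᵥ (ER *ᵥ z))
      + 2 * δL * (u ⬝ᵥ HL *ᵥ (EL *ᵥ w - IR2L *ᵥ (ER *ᵥ z)))
      + 2 * σL * (w ⬝ᵥ HL *ᵥ (EL *ᵥ (u - IR2L *ᵥ v)))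
      + 2 * δR * (v ⬝ᵥ HR *ᵥ (ER *ᵥ z - IL2R *ᵥ (EL *ᵥ w)))
      + 2 * σR * (z ⬝ᵥ HR *ᵥ (ER *ᵥ (v - IL2R *ᵥ u))) = 0 := by
  have hL : HL.IsSymm := hHL.isSymm
  have hEL_self : w ⬝ᵥ HL *ᵥ (EL *ᵥ u) = u ⬝ᵥ HL *ᵥ (EL *ᵥ w) := by
    rw [hHL.dotProduct_mulVec_mulVec_comm hEL, hL.dotProduct_mulVec_comm]
  have hER_self : z ⬝ᵥ HR *ᵥ (ER *ᵥ v) = v ⬝ᵥ HR *ᵥ (ER *ᵥ z) := by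
    rw [hHR.dotProduct_mulVec_mulVec_comm hER, hHR.isSymm.dotProduct_mulVec_comm]
  have hER_cross : z ⬝ᵥ HR *ᵥ (ER *ᵥ (IL2R *ᵥ u)) = u ⬝ᵥ HL *ᵥ (IR2L *ᵥ (ER *ᵥ z)) := by
    rw [hHR.dotProduct_mulVec_mulVec_comm hER,
      dotProduct_mulVec_mulVec_eq_of_mul_eq_transpose_mul hSBP, hL.dotProduct_mulVec_comm]
  have hEL_cross : v ⬝ᵥ HR *ᵥ (IL2R *ᵥ (EL *ᵥ w)) = w ⬝ᵥ HL *ᵥ (EL *ᵥ (IR2L *ᵥ v)) := by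
    rw [dotProduct_mulVec_mulVec_eq_of_mul_eq_transpose_mul hSBP,
      hHL.dotProduct_mulVec_mulVec_comm hEL w, hL.dotProduct_mulVec_comm (EL *ᵥ w)]
  simp only [mulVec_sub, dotProduct_sub]
  rw [hEL_self, hER_self, hER_cross, hEL_cross]
  subst h1 h2
  linear_combination (2 * (u ⬝ᵥ HL *ᵥ (EL *ᵥ w)) - 2 * (v ⬝ᵥ HR *ᵥ (ER *ᵥ z))) * h3
end

section
/- Let H_L be a symmetric m×m real matrix, M a symmetric k×k real matrix, and let I_{R2L} ∈ ℝ^{m×k}, I_{L2R} ∈ ℝ^{k×m} satisfy the SBP-preserving property M I_{L2R} = I_{R2L}ᵀ H_L. Let u, p, p̃ ∈ ℝᵐ with p = Diag(u) p̃, and v, q, q̃ ∈ ℝᵏ with q = Diag(v) q̃. Then [−uᵀH_L p − uᵀH_L Diag(u) p̃ + vᵀM q + (1/2)(vᵀM Diag(v) q̃ + (Diag(v) q̃)ᵀ M v)] + [uᵀH_L p − uᵀH_L I_{R2L} q] + [uᵀH_L Diag(u) p̃ − vᵀ I_{R2L}ᵀ H_L Diag(u) p̃] + [−(1/2)(vᵀM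 q + qᵀ M v) + vᵀM I_{L2R} p] + [−(1/2)(vᵀM Diag(v) q̃ + (Diag(v) q̃)ᵀ M v) + uᵀ I_{L2R}ᵀ M Diag(v) q̃] = 0. -/
/-!
The SBP-preserving property `M I_{L2R} = I_{R2L}ᵀ H_L` and its transpose
`I_{L2R}ᵀ M = H_L I_{R2L}` let each coupling term be rewritten as the matching
term of the other scheme: the FD-side terms cancel against the `p`-SAT once
`p = Diag(u) p̃`, the FE-side terms against the `q̃`-SAT once `q = Diag(v) q̃`,
and the symmetry of `M` cancels the remaining `q`-terms.
-/

open Matrix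

variable {R ι κ : Type*} [CommSemiring R] [Fintype ι] [Fintype κ]

lemma Matrix.IsSymm.dotProduct_mulVec_comm_s8 {A : Matrix ι ι R} (hA : A.IsSymm) (x y : ι → R) :
    x ⬝ᵥ A *ᵥ y = y ⬝ᵥ A *ᵥ x := by
  rw [dotProduct_mulVec, ← mulVec_transpose, hA, dotProduct_comm]

lemma Matrix.transpose_mul_eq_mul_of_mul_eq_transpose_mul {M : Matrix κ κ R} {H : Matrix ι ι R}
    {A : Matrix κ ι R} {B : Matrix ι κ R} (hM : M.IsSymm) (hH : H.IsSymm)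
    (hSBP : M * A = Bᵀ * H) : Aᵀ * M = H * B := by
  rw [← hM.eq, ← transpose_mul, hSBP, transpose_mul, transpose_transpose, hH.eq]

/-- Inviscid flux cancellation for the FD–FE interface coupling with the
nondiagonal FE interface mass matrix `M`. -/
theorem stmt_8 (m k : ℕ)
    (HL : Matrix (Fin m) (Fin m) ℝ) (hHL : HLᵀ = HL)
    (M : Matrix (Fin k) (Fin k) ℝ) (hM : Mᵀ = M)
    (IR2L : Matrix (Fin m) (Fin k) ℝ) (IL2R : Matrix (Fin k) (Fin m) ℝ)
    (hSBP : M * IL2R = IR2Lᵀ * HL)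
    (u p p' : Fin m → ℝ) (hp : p = Matrix.diagonal u *ᵥ p')
    (v q q' : Fin k → ℝ) (hq : q = Matrix.diagonal v *ᵥ q') :
    (-(u ⬝ᵥ HL *ᵥ p) - u ⬝ᵥ HL *ᵥ (Matrix.diagonal u *ᵥ p')
        + v ⬝ᵥ M *ᵥ q
        + (1 / 2) * (v ⬝ᵥ M *ᵥ (Matrix.diagonal v *ᵥ q')
                      + (Matrix.diagonal v *ᵥ q') ⬝ᵥ M *ᵥ v))
    + (u ⬝ᵥ HL *ᵥ p - u ⬝ᵥ HL *ᵥ (IR2L *ᵥ q))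
    + (u ⬝ᵥ HL *ᵥ (Matrix.diagonal u *ᵥ p')
        - v ⬝ᵥ IR2Lᵀ *ᵥ (HL *ᵥ (Matrix.diagonal u *ᵥ p')))
    + (-(1 / 2) * (v ⬝ᵥ M *ᵥ q + q ⬝ᵥ M *ᵥ v) + v ⬝ᵥ M *ᵥ (IL2R *ᵥ p))
    + (-(1 / 2) * (v ⬝ᵥ M *ᵥ (Matrix.diagonal v *ᵥ q')
                      + (Matrix.diagonal v *ᵥ q') ⬝ᵥ M *ᵥ v)
        + u ⬝ᵥ IL2Rᵀ *ᵥ (M *ᵥ (Matrix.diagonal v *ᵥ q'))) = 0 := by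
  have hM_comm : q ⬝ᵥ M *ᵥ v = v ⬝ᵥ M *ᵥ q := IsSymm.dotProduct_mulVec_comm_s8 hM q v
  have hFD : v ⬝ᵥ IR2Lᵀ *ᵥ (HL *ᵥ (diagonal u *ᵥ p')) = v ⬝ᵥ M *ᵥ (IL2R *ᵥ p) := by
    rw [mulVec_mulVec, ← hSBP, ← mulVec_mulVec, hp]
  have hFE : u ⬝ᵥ IL2Rᵀ *ᵥ (M *ᵥ (diagonal v *ᵥ q')) = u ⬝ᵥ HL *ᵥ (IR2L *ᵥ q) := by
    rw [mulVec_mulVec, transpose_mul_eq_mul_of_mul_eq_transpose_mul hM hHL hSBP,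
      ← mulVec_mulVec, hq]
  rw [hM_comm, hFD, hFE]
  ring
end

section
/- Let M_a, M_b, M_c be symmetric real matrices of sizes n_a×n_a, n_b×n_b, n_c×n_c, and let I_{a2b} ∈ ℝ^{n_b×n_a}, I_{b2a} ∈ ℝ^{n_a×n_b}, I_{b2c} ∈ ℝ^{n_c×n_b}, I_{c2b} ∈ ℝ^{n_b×n_c} satisfy the SBP-preserving properties M_b I_{a2b} = I_{b2a}ᵀ M_a and M_c I_{b2c} = I_{c2b}ᵀ M_b. Then the composed operators I_{a2c} = I_{b2c} I_{a2b} and I_{c2a} = I_{b2a} I_{c2b} again satisfy the SBP-preserving property M_c I_{a2c} = I_{c2a}ᵀ M_a. -/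
open Matrix

def Matrix.IsSBPPreserving {l r R : Type*} [Fintype l] [Fintype r] [CommSemiring R]
    (Hl : Matrix l l R) (Hr : Matrix r r R) (Il2r : Matrix r l R) (Ir2l : Matrix l r R) :
    Prop :=
  Hr * Il2r = Ir2lᵀ * Hl

theorem Matrix.IsSBPPreserving.comp {a b c R : Type*} [Fintype a] [Fintype b] [Fintype c]
    [CommSemiring R] {Ha : Matrix a a R} {Hb : Matrix b b R} {Hc : Matrix c c R}
    {Ia2b : Matrix b a R} {Ib2a : Matrix a b R} {Ib2c : Matrix c b R} {Ic2b : Matrix b c R}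
    (hab : IsSBPPreserving Ha Hb Ia2b Ib2a) (hbc : IsSBPPreserving Hb Hc Ib2c Ic2b) :
    IsSBPPreserving Ha Hc (Ib2c * Ia2b) (Ib2a * Ic2b) := by
  unfold IsSBPPreserving at *
  calc Hc * (Ib2c * Ia2b) = Ic2bᵀ * (Hb * Ia2b) := by
        rw [← Matrix.mul_assoc, hbc, Matrix.mul_assoc]
    _ = (Ib2a * Ic2b)ᵀ * Ha := by rw [hab, transpose_mul, Matrix.mul_assoc]

theorem stmt_11_general (na nb nc : ℕ)
    (Ma : Matrix (Fin na) (Fin na) ℝ)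
    (Mb : Matrix (Fin nb) (Fin nb) ℝ)
    (Mc : Matrix (Fin nc) (Fin nc) ℝ)
    (Ia2b : Matrix (Fin nb) (Fin na) ℝ) (Ib2a : Matrix (Fin na) (Fin nb) ℝ)
    (Ib2c : Matrix (Fin nc) (Fin nb) ℝ) (Ic2b : Matrix (Fin nb) (Fin nc) ℝ)
    (hab : Mb * Ia2b = Ib2aᵀ * Ma)
    (hbc : Mc * Ib2c = Ic2bᵀ * Mb) :
    Mc * (Ib2c * Ia2b) = (Ib2a * Ic2b)ᵀ * Ma :=
  IsSBPPreserving.comp hab hbc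

/-- Composition of SBP-preserving interpolation operator pairs is again
SBP-preserving. -/
theorem stmt_11 (na nb nc : ℕ)
    (Ma : Matrix (Fin na) (Fin na) ℝ) (hMa : Maᵀ = Ma)
    (Mb : Matrix (Fin nb) (Fin nb) ℝ) (hMb : Mbᵀ = Mb)
    (Mc : Matrix (Fin nc) (Fin nc) ℝ) (hMc : Mcᵀ = Mc)
    (Ia2b : Matrix (Fin nb) (Fin na) ℝ) (Ib2a : Matrix (Fin na) (Fin nb) ℝ)
    (Ib2c : Matrix (Fin nc) (Fin nb) ℝ) (Ic2b : Matrix (Fin nb) (Fin nc) ℝ)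
    (hab : Mb * Ia2b = Ib2aᵀ * Ma)
    (hbc : Mc * Ib2c = Ic2bᵀ * Mb) :
    Mc * (Ib2c * Ia2b) = (Ib2a * Ic2b)ᵀ * Ma :=
  stmt_11_general na nb nc Ma Mb Mc Ia2b Ib2a Ib2c Ic2b hab hbc
end

section
/- Let H be an m×m real matrix, H_M an invertible k×k real matrix, M a symmetric k×k real matrix, and let I_{L2M} ∈ ℝ^{k×m}, I_{M2L} ∈ ℝ^{m×k} satisfy H_M I_{L2M} = I_{M2L}ᵀ H. Define I_{L2R} = I_{L2M} (composition with the identity map I_{M2R} = I_k) and I_{R2L} = I_{M2L} (M H_M⁻¹)ᵀ. Then M I_{L2R} = I_{R2L}ᵀ H, i.e., (I_{L2R}, I_{R2L}) is a pair of SBP-preserving interpolation operators with respect to the norms (H, M). -/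
/-!
The map `I_{M2R} = 1` from the middle layer to the right one, paired with
`I_{R2M} = (M H_M⁻¹)ᵀ`, is SBP-preserving with respect to `(H_M, M)` as soon as `H_M`
is invertible, and SBP preservation is stable under composition of interpolation
operators; composing with the given pair through the middle layer gives the result.
-/

open Matrix

namespace Matrix

variable {R : Type*} [CommRing R] {l m n : Type*} [Fintype l] [Fintype m] [Fintype n]

def IsSBPPreserving_s12 (H : Matrix l l R) (M : Matrix m m R)
    (IL2R : Matrix m l R) (IR2L : Matrix l m R) : Prop :=
  M * IL2R = IR2Lᵀ * H

theorem IsSBPPreserving_s12.comp {H : Matrix l l R} {HM : Matrix m m R} {M : Matrix n n R}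
    {IL2M : Matrix m l R} {IM2L : Matrix l m R} {IM2R : Matrix n m R} {IR2M : Matrix m n R}
    (hLM : IsSBPPreserving_s12 H HM IL2M IM2L) (hMR : IsSBPPreserving_s12 HM M IM2R IR2M) :
    IsSBPPreserving_s12 H M (IM2R * IL2M) (IM2L * IR2M) := by
  unfold IsSBPPreserving_s12 at *
  rw [← Matrix.mul_assoc, hMR, Matrix.mul_assoc, hLM, transpose_mul, Matrix.mul_assoc]

theorem isSBPPreserving_one_transpose_mul_inv [DecidableEq m] {HM M : Matrix m m R}
    (hHM : IsUnit HM.det) : IsSBPPreserving_s12 HM M 1 (M * HM⁻¹)ᵀ := by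
  rw [IsSBPPreserving_s12, transpose_transpose, Matrix.mul_assoc, nonsing_inv_mul _ hHM]

end Matrix

theorem stmt_12_general (m k : ℕ)
    (H : Matrix (Fin m) (Fin m) ℝ)
    (HM : Matrix (Fin k) (Fin k) ℝ) (hHMinv : IsUnit HM.det)
    (M : Matrix (Fin k) (Fin k) ℝ)
    (IL2M : Matrix (Fin k) (Fin m) ℝ) (IM2L : Matrix (Fin m) (Fin k) ℝ)
    (hSBP : HM * IL2M = IM2Lᵀ * H) :
    let IL2R : Matrix (Fin k) (Fin m) ℝ := IL2M
    let IR2L : Matrix (Fin m) (Fin k) ℝ := IM2L * (M * HM⁻¹)ᵀ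
    M * IL2R = IR2Lᵀ * H := by
  have h : IsSBPPreserving_s12 H M ((1 : Matrix (Fin k) (Fin k) ℝ) * IL2M) (IM2L * (M * HM⁻¹)ᵀ) :=
    IsSBPPreserving_s12.comp hSBP (isSBPPreserving_one_transpose_mul_inv hHMinv)
  rwa [Matrix.one_mul] at h

/-- Construction of nondiagonal-norm SBP-preserving interpolation operators from
existing diagonal-norm ones via a middle layer: with `H_M I_{L2M} = I_{M2L}ᵀ H`,
the operators `I_{L2R} = I_{L2M}` and `I_{R2L} = I_{M2L} (M H_M⁻¹)ᵀ` satisfy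
`M I_{L2R} = I_{R2L}ᵀ H`. -/
theorem stmt_12 (m k : ℕ)
    (H : Matrix (Fin m) (Fin m) ℝ)
    (HM : Matrix (Fin k) (Fin k) ℝ) (hHMinv : IsUnit HM.det)
    (M : Matrix (Fin k) (Fin k) ℝ) (hM : Mᵀ = M)
    (IL2M : Matrix (Fin k) (Fin m) ℝ) (IM2L : Matrix (Fin m) (Fin k) ℝ)
    (hSBP : HM * IL2M = IM2Lᵀ * H) :
    let IL2R : Matrix (Fin k) (Fin m) ℝ := IL2M
    let IR2L : Matrix (Fin m) (Fin k) ℝ := IM2L * (M * HM⁻¹)ᵀ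
    M * IL2R = IR2Lᵀ * H :=
  stmt_12_general m k H HM hHMinv M IL2M IM2L hSBP
end

section
/- Let f : ℝ → ℝ be twice differentiable and α ∈ ℝ a constant such that α f(s) = (1 − α) s f'(s) for all s ∈ ℝ. Then for every differentiable function u : ℝ → ℝ and every x ∈ ℝ, −α [ (f∘u)'(x) · u(x) − f(u(x)) · u'(x) ] + (1 − α) · u(x)² · (f'∘u)'(x) = 0. -/
/-!
Differentiating the splitting condition `α f = (1 − α) s f'` gives
`α f' = (1 − α) (f' + s f'')`. By the chain rule the left-hand side of the identity is
`u' · (α f(u) − α u f'(u) + (1 − α) u² f''(u))`; replacing `α f(u)` by the splitting condition,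
the bracket becomes `u · ((1 − α) (f' + u f'') − α f')` evaluated at `u`, which vanishes by the
differentiated condition.
-/

theorem mul_deriv_eq_of_mul_eq_mul_deriv {𝕜 : Type*} [NontriviallyNormedField 𝕜]
    {f : 𝕜 → 𝕜} {α s : 𝕜} (hf : DifferentiableAt 𝕜 f s)
    (hf' : DifferentiableAt 𝕜 (deriv f) s) (hsplit : ∀ s, α * f s = (1 - α) * s * deriv f s) :
    α * deriv f s = (1 - α) * (deriv f s + s * deriv (deriv f) s) := by
  have hrhs : HasDerivAt (fun s => (1 - α) * s * deriv f s)
      ((1 - α) * (deriv f s + s * deriv (deriv f) s)) s :=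
    (((hasDerivAt_id s).const_mul (1 - α)).mul hf'.hasDerivAt).congr_deriv
      (by simp only [id, mul_one]; ring)
  rw [← (hf.hasDerivAt.const_mul α).deriv, ← hrhs.deriv, funext hsplit]

/-- The spatial-derivative-free condition `α f(s) = (1 − α) s f'(s)` is
sufficient for the pointwise skew-symmetry identity
`−α[(f(u))' u − f(u) u'] + (1 − α) u² (f'(u))' = 0`. -/
theorem stmt_14 (f : ℝ → ℝ)
    (hf : ∀ x : ℝ, DifferentiableAt ℝ f x)
    (hf' : ∀ x : ℝ, DifferentiableAt ℝ (deriv f) x)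
    (α : ℝ) (hsplit : ∀ s : ℝ, α * f s = (1 - α) * s * deriv f s)
    (u : ℝ → ℝ) (hu : ∀ x : ℝ, DifferentiableAt ℝ u x) (x : ℝ) :
    -α * (deriv (f ∘ u) x * u x - f (u x) * deriv u x)
      + (1 - α) * (u x) ^ 2 * deriv (deriv f ∘ u) x = 0 := by
  have hsplit_deriv := mul_deriv_eq_of_mul_eq_mul_deriv (hf (u x)) (hf' (u x)) hsplit
  rw [deriv_comp x (hf (u x)) (hu x), deriv_comp x (hf' (u x)) (hu x)]
  linear_combination deriv u x * hsplit (u x) - u x * deriv u x * hsplit_deriv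
end
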